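/- Define the recursion z_{l,1} = (0,0) ∈ ℝ² and z_{k−1,4(s−1)+j} = z_{k,s} + rot^{(α)}(h_{k−2}^{(j)}), where h_{k−2}^{(j)} ∈ {(±h_{k−2}, ±h_{k−2})} and h_k = h/2^{l−k} with 0 < h ≤ 2^l/(√2·λ). Then for all 0 ≤ k ≤ l and 1 ≤ s ≤ 4^{l−k}, ‖z_{k,s}‖_∞ ≤ (2^l − 2^k)/(2λ). -/

import Mathlib

/-! A step of the recursion from level `k + 1` to level `k` adds a rotated corner vector.
Rotation stretches the sup norm by at most `|cos α| + |sin α| ≤ √2`, so the step has sup norm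
at most `√2 · h_{k-1} ≤ 2^k / (2λ)`, and these increments telescope from level `l` down to
`(2^l − 2^k) / (2λ)`. -/

/-- Rotation of `ℝ²` through angle `β` about the origin. -/
noncomputable def rot (β : ℝ) (v : ℝ × ℝ) : ℝ × ℝ :=
  (Real.cos β * v.1 - Real.sin β * v.2, Real.sin β * v.1 + Real.cos β * v.2)

/-- The four corner vectors `h_{k−2}^{(j)} ∈ {(±h_{k−2}, ±h_{k−2})}` where
`h_{k−2} = h·2^{(k−2)−l}`. -/
noncomputable def hvec (h : ℝ) (l k j : ℕ) : ℝ × ℝ :=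
  let c : ℝ := h * (2 : ℝ) ^ ((k : ℤ) - 2 - (l : ℤ))
  if j = 1 then (-c, -c) else if j = 2 then (c, -c) else if j = 3 then (-c, c) else (c, c)

lemma abs_cos_add_abs_sin_le_sqrt_two (β : ℝ) : |Real.cos β| + |Real.sin β| ≤ √2 := by
  apply Real.le_sqrt_of_sq_le
  nlinarith [sq_abs (Real.cos β), sq_abs (Real.sin β), Real.sin_sq_add_cos_sq β,
    sq_nonneg (|Real.cos β| - |Real.sin β|)]

lemma norm_rot_le (β : ℝ) (v : ℝ × ℝ) : ‖rot β v‖ ≤ √2 * ‖v‖ := by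
  have hcs := abs_cos_add_abs_sin_le_sqrt_two β
  have h1 : |v.1| ≤ ‖v‖ := by simpa using norm_fst_le v
  have h2 : |v.2| ≤ ‖v‖ := by simpa using norm_snd_le v
  have hc := abs_nonneg (Real.cos β)
  have hs := abs_nonneg (Real.sin β)
  have hsum : ∀ a b : ℝ, |a| ≤ ‖v‖ → |b| ≤ ‖v‖ →
      |Real.cos β| * |a| + |Real.sin β| * |b| ≤ √2 * ‖v‖ := fun a b ha hb => by
    nlinarith [mul_le_mul_of_nonneg_left ha hc, mul_le_mul_of_nonneg_left hb hs,
      mul_le_mul_of_nonneg_right hcs (norm_nonneg v)]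
  rw [Prod.norm_def, Real.norm_eq_abs, Real.norm_eq_abs, rot]
  refine max_le ?_ ?_
  · calc |Real.cos β * v.1 - Real.sin β * v.2|
        ≤ |Real.cos β| * |v.1| + |Real.sin β| * |v.2| := by
          simpa only [abs_mul] using abs_sub (Real.cos β * v.1) (Real.sin β * v.2)
      _ ≤ √2 * ‖v‖ := hsum _ _ h1 h2
  · calc |Real.sin β * v.1 + Real.cos β * v.2|
        ≤ |Real.cos β| * |v.2| + |Real.sin β| * |v.1| := by
          rw [add_comm]
          simpa only [abs_mul] using abs_add_le (Real.cos β * v.2) (Real.sin β * v.1)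
      _ ≤ √2 * ‖v‖ := hsum _ _ h2 h1

lemma norm_hvec (h : ℝ) (l k j : ℕ) :
    ‖hvec h l k j‖ = |h| * (2 : ℝ) ^ ((k : ℤ) - 2 - l) := by
  unfold hvec
  split_ifs <;> simp [Prod.norm_def]

lemma norm_rot_hvec_succ_le {lam h : ℝ} {l : ℕ} (hlam : 0 < lam) (hh0 : 0 ≤ h)
    (hh : h ≤ 2 ^ l / (√2 * lam)) (α : ℝ) (k j : ℕ) :
    ‖rot α (hvec h l (k + 1) j)‖ ≤ 2 ^ k / (2 * lam) := by
  have hscale : (2 : ℝ) ^ (((k + 1 : ℕ) : ℤ) - 2 - l) = 2 ^ k / (2 * 2 ^ l) := by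
    rw [show ((k + 1 : ℕ) : ℤ) - 2 - l = k - (1 + l) by push_cast; ring,
      zpow_sub₀ two_ne_zero, zpow_natCast, zpow_add₀ two_ne_zero, zpow_one, zpow_natCast]
  calc ‖rot α (hvec h l (k + 1) j)‖ ≤ √2 * (h * 2 ^ (((k + 1 : ℕ) : ℤ) - 2 - l)) :=
        (norm_rot_le α _).trans_eq (by rw [norm_hvec, abs_of_nonneg hh0])
    _ ≤ √2 * (2 ^ l / (√2 * lam) * (2 ^ k / (2 * 2 ^ l))) := by
        rw [hscale]; gcongr
    _ = 2 ^ k / (2 * lam) := by field_simp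

lemma exists_eq_mul_pred_add {m n s : ℕ} (hs1 : 1 ≤ s) (hs : s ≤ m * n) :
    ∃ q j, 1 ≤ q ∧ q ≤ n ∧ 1 ≤ j ∧ j ≤ m ∧ s = m * (q - 1) + j := by
  have hm : 0 < m := Nat.pos_of_ne_zero (by rintro rfl; omega)
  refine ⟨(s - 1) / m + 1, (s - 1) % m + 1, Nat.le_add_left 1 _, ?_, by omega,
    Nat.mod_lt _ hm, ?_⟩
  · have : (s - 1) / m < n := (Nat.div_lt_iff_lt_mul hm).2 (by rw [mul_comm]; omega)
    omega
  · have := Nat.div_add_mod (s - 1) m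
    simp only [Nat.add_sub_cancel]
    omega

lemma norm_le_of_norm_sub_parent_le {E : Type*} [SeminormedAddCommGroup E]
    {m l : ℕ} {z : ℕ → ℕ → E} {B : ℕ → ℝ} (hroot : ‖z l 1‖ ≤ B l)
    (hstep : ∀ k s j, k < l → 1 ≤ s → s ≤ m ^ (l - (k + 1)) → 1 ≤ j → j ≤ m →
      ‖z k (m * (s - 1) + j) - z (k + 1) s‖ ≤ B k - B (k + 1))
    {k : ℕ} (hk : k ≤ l) : ∀ s, 1 ≤ s → s ≤ m ^ (l - k) → ‖z k s‖ ≤ B k := by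
  induction hk using Nat.decreasingInduction with
  | self =>
    intro s hs1 hs
    obtain rfl : s = 1 := by simp at hs; omega
    exact hroot
  | of_succ k hk ih =>
    intro s hs1 hs
    rw [show l - k = l - (k + 1) + 1 by omega, pow_succ'] at hs
    obtain ⟨q, j, hq1, hq, hj1, hj, rfl⟩ := exists_eq_mul_pred_add hs1 hs
    calc ‖z k (m * (q - 1) + j)‖
        ≤ ‖z (k + 1) q‖ + ‖z k (m * (q - 1) + j) - z (k + 1) q‖ := norm_le_insert' _ _
      _ ≤ B (k + 1) + (B k - B (k + 1)) := add_le_add (ih q hq1 hq) (hstep k q j hk hq1 hq hj1 hj)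
      _ = B k := by ring

theorem z_recursion_bound_general (lam l : ℕ) (hlam : 0 < lam) (h α : ℝ)
    (hh0 : 0 < h) (hh : h ≤ 2 ^ l / (Real.sqrt 2 * lam))
    (z : ℕ → ℕ → ℝ × ℝ)
    (hz0 : z l 1 = (0, 0))
    (hrec : ∀ k s j, 1 ≤ k → k ≤ l → 1 ≤ s → s ≤ 4 ^ (l - k) → 1 ≤ j → j ≤ 4 →
      z (k - 1) (4 * (s - 1) + j) = z k s + rot α (hvec h l k j)) :
    ∀ k s, k ≤ l → 1 ≤ s → s ≤ 4 ^ (l - k) →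
      max |(z k s).1| |(z k s).2| ≤ ((2 : ℝ) ^ l - 2 ^ k) / (2 * lam) := by
  intro k s hk hs1 hs
  have hlam' : (0 : ℝ) < lam := by exact_mod_cast hlam
  have hstep : ∀ k s j, k < l → 1 ≤ s → s ≤ 4 ^ (l - (k + 1)) → 1 ≤ j → j ≤ 4 →
      ‖z k (4 * (s - 1) + j) - z (k + 1) s‖ ≤
        ((2 : ℝ) ^ l - 2 ^ k) / (2 * lam) - ((2 : ℝ) ^ l - 2 ^ (k + 1)) / (2 * lam) := by
    intro k s j hk hs1 hs hj1 hj
    have hchild := hrec (k + 1) s j (Nat.le_add_left 1 k) hk hs1 hs hj1 hj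
    rw [Nat.add_sub_cancel] at hchild
    rw [hchild, add_sub_cancel_left]
    calc _ ≤ (2 : ℝ) ^ k / (2 * lam) := norm_rot_hvec_succ_le hlam' hh0.le hh α k j
      _ = _ := by ring
  have hroot : ‖z l 1‖ ≤ ((2 : ℝ) ^ l - 2 ^ l) / (2 * lam) := by simp [hz0]
  simpa only [Prod.norm_def, Real.norm_eq_abs] using
    norm_le_of_norm_sub_parent_le (B := fun k ↦ ((2 : ℝ) ^ l - 2 ^ k) / (2 * lam))
      hroot hstep hk s hs1 hs

/-- For the recursion `z_{l,1} = (0,0)`,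
`z_{k−1,4(s−1)+j} = z_{k,s} + rot^{(α)}(h_{k−2}^{(j)})` with
`0 < h ≤ 2^l/(√2·λ)`, one has `‖z_{k,s}‖_∞ ≤ (2^l − 2^k)/(2λ)` for all
`0 ≤ k ≤ l` and `1 ≤ s ≤ 4^{l−k}`. -/
theorem z_recursion_bound (lam l : ℕ) (hlam : 0 < lam) (hl : 0 < l) (h α : ℝ)
    (hh0 : 0 < h) (hh : h ≤ 2 ^ l / (Real.sqrt 2 * lam))
    (z : ℕ → ℕ → ℝ × ℝ)
    (hz0 : z l 1 = (0, 0))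
    (hrec : ∀ k s j, 1 ≤ k → k ≤ l → 1 ≤ s → s ≤ 4 ^ (l - k) → 1 ≤ j → j ≤ 4 →
      z (k - 1) (4 * (s - 1) + j) = z k s + rot α (hvec h l k j)) :
    ∀ k s, k ≤ l → 1 ≤ s → s ≤ 4 ^ (l - k) →
      max |(z k s).1| |(z k s).2| ≤ ((2 : ℝ) ^ l - 2 ^ k) / (2 * lam) :=
  z_recursion_bound_general lam l hlam h α hh0 hh z hz0 hrec
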